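/- Let (F_k)_{k∈[C]} be function classes from X to ℝ, G a set of classifiers from X to [C], and F_G = {x ↦ f_{g(x)}(x) : g ∈ G, f_k ∈ F_k} the piecewise class. Then for any sample x_1,...,x_n and ε > 0, the L_∞ empirical covering number satisfies N(ε, F_G, d_∞) ≤ Π_G(n) · ∏_{k=1}^C N(ε, F_k, d_∞), where Π_G(n) is the growth function of G. -/

import Mathlib

/-- Empirical L_q pseudo-metric on a sample. -/
noncomputable def empDist {Z : Type*} {n : ℕ} (q : ℝ) (z : Fin n → Z)
    (f g : Z → ℝ) : ℝ :=
  ((n : ℝ)⁻¹ * ∑ i, |f (z i) - g (z i)| ^ q) ^ (1 / q)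

/-- Empirical L_∞ pseudo-metric on a sample. -/
noncomputable def empDistInf {Z : Type*} {n : ℕ} (z : Fin n → Z)
    (f g : Z → ℝ) : ℝ :=
  ⨆ i, |f (z i) - g (z i)|

/-- Covering number: smallest cardinality of a proper ε-net of F
(distance at most ε). -/
noncomputable def covN {α : Type*} (ε : ℝ) (F : Set α) (d : α → α → ℝ) : ℕ∞ :=
  sInf {m : ℕ∞ | ∃ H : Finset α, ↑H ⊆ F ∧ (∀ f ∈ F, ∃ h ∈ H, d f h ≤ ε) ∧
    (H.card : ℕ∞) = m}

/-!
Fix one member of `F_G`, given by a classifier `g ∈ G` and pieces `f_k ∈ F_k`. Replace `g` by the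
representative of its trace on the sample and each `f_k` by an element of an optimal `ε`-net of
`F_k`. On every sample point `x_i` the two functions then evaluate the same piece at `x_i`, so
their `d_∞`-distance is at most `ε`. The functions obtained this way form an `ε`-net of `F_G`
indexed by traces and tuples of net elements.
-/

open Finset

section EmpiricalDistance

variable {Z : Type*} {n : ℕ} (z : Fin n → Z) (f g : Z → ℝ)

lemma abs_sub_le_empDistInf (i : Fin n) : |f (z i) - g (z i)| ≤ empDistInf z f g :=
  le_ciSup (f := fun i => |f (z i) - g (z i)|) (Set.finite_range _).bddAbove i

-- `0 ≤ ε` is needed for the empty sample, where the supremum is `sSup ∅ = 0`.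
lemma empDistInf_le_iff {ε : ℝ} (hε : 0 ≤ ε) :
    empDistInf z f g ≤ ε ↔ ∀ i, |f (z i) - g (z i)| ≤ ε :=
  ⟨fun h i => (abs_sub_le_empDistInf z f g i).trans h, fun h => Real.iSup_le h hε⟩

end EmpiricalDistance

section CoveringNumber

variable {α : Type*} {ε : ℝ} {F : Set α} {d : α → α → ℝ}

lemma covN_le_card {H : Finset α} (hHF : ↑H ⊆ F) (hnet : ∀ f ∈ F, ∃ h ∈ H, d f h ≤ ε) :
    covN ε F d ≤ H.card :=
  sInf_le ⟨H, hHF, hnet, rfl⟩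

lemma covN_empty : covN ε (∅ : Set α) d = 0 :=
  nonpos_iff_eq_zero.1 <| by simpa using covN_le_card (H := ∅) (F := ∅) (d := d) (ε := ε)

lemma exists_net_card_eq_covN (h : covN ε F d ≠ ⊤) :
    ∃ H : Finset α, ↑H ⊆ F ∧ (∀ f ∈ F, ∃ h ∈ H, d f h ≤ ε) ∧ (H.card : ℕ∞) = covN ε F d := by
  have hsizes : {m : ℕ∞ | ∃ H : Finset α, ↑H ⊆ F ∧ (∀ f ∈ F, ∃ h ∈ H, d f h ≤ ε) ∧
      (H.card : ℕ∞) = m}.Nonempty := by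
    contrapose! h
    rw [covN, h, sInf_empty]
  exact csInf_mem hsizes

lemma covN_ne_zero (hF : F.Nonempty) : covN ε F d ≠ 0 := by
  intro h0
  obtain ⟨H, -, hnet, hcard⟩ := exists_net_card_eq_covN (h0 ▸ ENat.zero_ne_top)
  obtain ⟨f, hf⟩ := hF
  obtain ⟨h, hH, -⟩ := hnet f hf
  rw [h0, Nat.cast_eq_zero, card_eq_zero] at hcard
  simp [hcard] at hH

end CoveringNumber

section Piecewise

variable {X ι : Type*} {n : ℕ}

def piecewiseClass (G : Set (X → ι)) (F : ι → Set (X → ℝ)) : Set (X → ℝ) :=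
  {f | ∃ g ∈ G, ∃ fk : ι → X → ℝ, (∀ k, fk k ∈ F k) ∧ f = fun w => fk (g w) w}

def traceOn (G : Set (X → ι)) (x : Fin n → X) : Set (Fin n → ι) :=
  {c | ∃ g ∈ G, c = fun i => g (x i)}

lemma exists_finset_card_eq_ncard_traceOn [Finite ι] (G : Set (X → ι)) (x : Fin n → X) :
    ∃ G₀ : Finset (X → ι), ↑G₀ ⊆ G ∧ G₀.card = (traceOn G x).ncard ∧
      ∀ g ∈ G, ∃ g₀ ∈ G₀, ∀ i, g₀ (x i) = g (x i) := by
  set tr : (X → ι) → Fin n → ι := fun g i => g (x i)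
  have htrace : traceOn G x = tr '' G := by
    ext c
    simp only [traceOn, Set.mem_ofPred_eq, Set.mem_image, eq_comm (a := c), tr]
  obtain ⟨G₀, hG₀G, hbij⟩ := Set.exists_subset_bijOn G tr
  have hfin : G₀.Finite := (Set.toFinite (tr '' G₀)).of_finite_image hbij.injOn
  refine ⟨hfin.toFinset, by simpa using hG₀G, ?_, fun g hg => ?_⟩
  · rw [htrace, ← hbij.image_eq, hbij.injOn.ncard_image, Set.ncard_eq_toFinset_card _ hfin]
  · obtain ⟨g₀, hg₀, htr⟩ := hbij.surjOn (Set.mem_image_of_mem tr hg)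
    exact ⟨g₀, hfin.mem_toFinset.2 hg₀, congrFun htr⟩

lemma empDistInf_piecewise_le {x : Fin n → X} {ε : ℝ} (hε : 0 ≤ ε) {g g₀ : X → ι}
    (hg₀ : ∀ i, g₀ (x i) = g (x i)) {f h : ι → X → ℝ}
    (hfh : ∀ k, empDistInf x (f k) (h k) ≤ ε) :
    empDistInf x (fun w => f (g w) w) (fun w => h (g₀ w) w) ≤ ε := by
  refine (empDistInf_le_iff x _ _ hε).2 fun i => ?_
  rw [hg₀ i]
  exact (abs_sub_le_empDistInf x _ _ i).trans (hfh _)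

lemma covN_piecewiseClass_le [Fintype ι] {G : Set (X → ι)}
    {F : ι → Set (X → ℝ)} {x : Fin n → X} {ε : ℝ} (hε : 0 ≤ ε) (H : ι → Finset (X → ℝ))
    (hHF : ∀ k, ↑(H k) ⊆ F k) (hnet : ∀ k, ∀ f ∈ F k, ∃ h ∈ H k, empDistInf x f h ≤ ε) :
    covN ε (piecewiseClass G F) (empDistInf x) ≤
      ((traceOn G x).ncard : ℕ∞) * ∏ k, ((H k).card : ℕ∞) := by
  classical
  obtain ⟨G₀, hG₀G, hcard, hrep⟩ := exists_finset_card_eq_ncard_traceOn G x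
  let net : Finset (X → ℝ) := (G₀ ×ˢ Fintype.piFinset H).image fun p w => p.2 (p.1 w) w
  have hsub : ↑net ⊆ piecewiseClass G F := by
    simp only [Set.subset_def, mem_coe, net, mem_image, mem_product, Fintype.mem_piFinset]
    rintro _ ⟨⟨g₀, h⟩, ⟨hg₀, hh⟩, rfl⟩
    exact ⟨g₀, hG₀G hg₀, h, fun k => hHF k (hh k), rfl⟩
  have hcover : ∀ f ∈ piecewiseClass G F, ∃ h ∈ net, empDistInf x f h ≤ ε := by
    rintro _ ⟨g, hg, fk, hfk, rfl⟩
    obtain ⟨g₀, hg₀, hg₀g⟩ := hrep g hg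
    choose h hh hfkh using fun k => hnet k (fk k) (hfk k)
    exact ⟨fun w => h (g₀ w) w,
      mem_image.2 ⟨(g₀, h), mem_product.2 ⟨hg₀, Fintype.mem_piFinset.2 hh⟩, rfl⟩,
      empDistInf_piecewise_le hε hg₀g hfkh⟩
  calc covN ε (piecewiseClass G F) (empDistInf x) ≤ net.card := covN_le_card hsub hcover
    _ ≤ ((G₀.card * ∏ k, (H k).card : ℕ) : ℕ∞) := by
      gcongr
      exact card_image_le.trans_eq (by rw [card_product, Fintype.card_piFinset])
    _ = ((traceOn G x).ncard : ℕ∞) * ∏ k, ((H k).card : ℕ∞) := by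
      rw [hcard]
      push_cast
      rfl

end Piecewise

theorem covN_pws_inf_general {X : Type*} (C n : ℕ)
    (F : Fin C → Set (X → ℝ)) (G : Set (X → Fin C)) (x : Fin n → X)
    (ε : ℝ) (hε : 0 < ε) :
    covN ε
      {f : X → ℝ | ∃ g ∈ G, ∃ fk : Fin C → X → ℝ, (∀ k, fk k ∈ F k) ∧
        f = fun w => fk (g w) w}
      (empDistInf x)
      ≤ (Set.ncard {c : Fin n → Fin C | ∃ g ∈ G, c = fun i => g (x i)} : ℕ∞) *
          ∏ k : Fin C, covN ε (F k) (empDistInf x) := by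
  change covN ε (piecewiseClass G F) (empDistInf x) ≤
    ((traceOn G x).ncard : ℕ∞) * ∏ k, covN ε (F k) (empDistInf x)
  rcases (piecewiseClass G F).eq_empty_or_nonempty with hempty | ⟨-, g, hg, fk, hfk, -⟩
  · rw [hempty, covN_empty]
    exact zero_le
  by_cases hfin : ∀ k, covN ε (F k) (empDistInf x) ≠ ⊤
  · choose H hHF hnet hcard using fun k => exists_net_card_eq_covN (hfin k)
    simpa only [hcard] using covN_piecewiseClass_le hε.le H hHF hnet
  · push Not at hfin
    obtain ⟨k, hk⟩ := hfin
    have htrace : (traceOn G x).ncard ≠ 0 :=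
      ((Set.ncard_pos (s := traceOn G x)).2 ⟨_, g, hg, rfl⟩).ne'
    have hprod : ∏ j, covN ε (F j) (empDistInf x) = ⊤ :=
      WithTop.prod_eq_top (mem_univ k) hk fun j _ => covN_ne_zero ⟨fk j, hfk j⟩
    rw [hprod, ENat.mul_top (by exact_mod_cast htrace)]
    exact le_top

theorem covN_pws_inf {X : Type*} (C n : ℕ) (hC : 0 < C) (hn : 0 < n)
    (F : Fin C → Set (X → ℝ)) (G : Set (X → Fin C)) (x : Fin n → X)
    (ε : ℝ) (hε : 0 < ε) :
    covN ε
      {f : X → ℝ | ∃ g ∈ G, ∃ fk : Fin C → X → ℝ, (∀ k, fk k ∈ F k) ∧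
        f = fun w => fk (g w) w}
      (empDistInf x)
      ≤ (Set.ncard {c : Fin n → Fin C | ∃ g ∈ G, c = fun i => g (x i)} : ℕ∞) *
          ∏ k : Fin C, covN ε (F k) (empDistInf x) :=
  covN_pws_inf_general C n F G x ε hε
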